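/- Let Δ be a fan in ℝⁿ and let (x_k)_{k∈ℕ} be a sequence of points of ℝⁿ. Suppose σ and σ' are cones of Δ such that the sequence (x_k) converges to infinity along σ and also converges to infinity along σ', in the following sense: there exists a linear subspace F of ℝⁿ complementary to L(σ) such that, writing x_k = y_k + z_k with y_k ∈ F and z_k ∈ L(σ), the sequence (y_k) converges in F and, for every w ∈ L(σ), there exists p such that z_k ∈ w + σ for all k ≥ p (and analogously for σ'). Then σ = σ'. -/

import Mathlib

open Filter Finset

section Cones

variable {E : Type*} [NormedAddCommGroup E] [NormedSpace ℝ E] [FiniteDimensional ℝ E]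

/-- Conic Carathéodory: a nonnegative combination can be rewritten with linearly
independent support. -/
lemma carath_cone {ι : Type*} [Fintype ι] [DecidableEq ι] (v : ι → E) :
    ∀ (N : ℕ) (s : Finset ι) (c : ι → ℝ), s.card ≤ N → (∀ i, 0 ≤ c i) → (∀ i ∉ s, c i = 0) →
    ∃ (t : Finset ι) (d : ι → ℝ), (∀ i, 0 ≤ d i) ∧ (∀ i ∉ t, d i = 0) ∧
      ∑ i, d i • v i = ∑ i, c i • v i ∧ LinearIndependent ℝ (fun i : t => v i) := by
  intro N
  induction N with
  | zero =>
    intro s c hcard hc hsupp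
    have hs : s = ∅ := Finset.card_eq_zero.mp (Nat.le_zero.mp hcard)
    subst hs
    have hc0 : ∀ i, c i = 0 := fun i => hsupp i (Finset.notMem_empty i)
    refine ⟨∅, 0, fun i => le_refl 0, fun i _ => rfl, ?_, ?_⟩
    · simp [hc0]
    · haveI : IsEmpty ((∅ : Finset ι) : Type _) := by
        simp [Finset.isEmpty_coe_sort]
        exact ⟨fun x => x.2⟩
      exact linearIndependent_empty_type
  | succ N ih =>
    intro s c hcard hc hsupp
    by_cases hli : LinearIndependent ℝ (fun i : s => v i)
    · exact ⟨s, c, hc, hsupp, rfl, hli⟩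
    · obtain ⟨g, hg0, i₁, hi₁⟩ := Fintype.not_linearIndependent_iff.mp hli
      -- extend g to ι
      set G : ι → ℝ := fun i => if h : i ∈ s then g ⟨i, h⟩ else 0 with hG
      have hGsum : ∑ i, G i • v i = 0 := by
        rw [← Finset.sum_subset (Finset.subset_univ s)
          (fun i _ hi => by simp [hG, dif_neg hi])]
        rw [← Finset.sum_attach s (fun i => G i • v i)]
        rw [← hg0]
        refine Finset.sum_congr rfl fun i _ => ?_
        simp [hG, i.2]
      have hGsupp : ∀ i ∉ s, G i = 0 := fun i hi => by simp [hG, dif_neg hi]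
      have hGne : ∃ i, G i ≠ 0 := ⟨i₁, by simpa [hG, i₁.2] using hi₁⟩
      -- key step, for a relation with a positive coefficient
      have key : ∀ g' : ι → ℝ, (∑ i, g' i • v i = 0) → (∀ i ∉ s, g' i = 0) →
          (∃ i, 0 < g' i) →
          ∃ (t : Finset ι) (d : ι → ℝ), (∀ i, 0 ≤ d i) ∧ (∀ i ∉ t, d i = 0) ∧
            ∑ i, d i • v i = ∑ i, c i • v i ∧ LinearIndependent ℝ (fun i : t => v i) := by
        intro g' hg'sum hg'supp hg'pos
        set T : Finset ι := s.filter (fun i => 0 < g' i) with hT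
        have hTne : T.Nonempty := by
          obtain ⟨i, hi⟩ := hg'pos
          refine ⟨i, Finset.mem_filter.mpr ⟨?_, hi⟩⟩
          by_contra h
          rw [hg'supp i h] at hi
          exact lt_irrefl 0 hi
        obtain ⟨i₀, hi₀T, hi₀min⟩ :=
          Finset.exists_mem_eq_inf' hTne (fun i => c i / g' i)
        set μ := T.inf' hTne (fun i => c i / g' i) with hμdef
        have hi₀s : i₀ ∈ s := (Finset.mem_filter.mp hi₀T).1
        have hi₀pos : 0 < g' i₀ := (Finset.mem_filter.mp hi₀T).2
        have hμ0 : 0 ≤ μ := by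
          apply Finset.le_inf'
          intro b hb
          exact div_nonneg (hc b) (le_of_lt (Finset.mem_filter.mp hb).2)
        set d : ι → ℝ := fun i => c i - μ * g' i with hd
        have hdnn : ∀ i, 0 ≤ d i := by
          intro i
          by_cases hiT : i ∈ T
          · have h1 : μ ≤ c i / g' i := Finset.inf'_le _ hiT
            have h2 : 0 < g' i := (Finset.mem_filter.mp hiT).2
            have := (le_div_iff₀ h2).mp h1
            simp only [hd]; linarith
          · have hle : g' i ≤ 0 := by
              by_cases his : i ∈ s
              · by_contra h
                push_neg at h
                exact hiT (Finset.mem_filter.mpr ⟨his, h⟩)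
              · rw [hg'supp i his]
            have h3 : μ * g' i ≤ 0 := mul_nonpos_of_nonneg_of_nonpos hμ0 hle
            have h4 := hc i
            simp only [hd]; linarith
        have hdi₀ : d i₀ = 0 := by
          simp only [hd]
          rw [hi₀min]
          field_simp
          simp
        have hdsupp : ∀ i ∉ s.erase i₀, d i = 0 := by
          intro i hi
          by_cases hii : i = i₀
          · rw [hii]; exact hdi₀
          · have his : i ∉ s := fun h => hi (Finset.mem_erase.mpr ⟨hii, h⟩)
            simp only [hd]
            rw [hsupp i his, hg'supp i his]
            ring
        have hdsum : ∑ i, d i • v i = ∑ i, c i • v i := by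
          simp only [hd, sub_smul, mul_smul]
          rw [Finset.sum_sub_distrib, ← Finset.smul_sum, hg'sum, smul_zero, sub_zero]
        have hcard' : (s.erase i₀).card ≤ N := by
          have := Finset.card_erase_of_mem hi₀s
          omega
        obtain ⟨t, d', h1, h2, h3, h4⟩ := ih (s.erase i₀) d hcard' hdnn hdsupp
        exact ⟨t, d', h1, h2, h3.trans hdsum, h4⟩
      by_cases hpos : ∃ i, 0 < G i
      · exact key G hGsum hGsupp hpos
      · push_neg at hpos
        refine key (-G) ?_ (fun i hi => by simp [hGsupp i hi]) ?_
        · simp only [Pi.neg_apply, neg_smul]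
          rw [Finset.sum_neg_distrib, hGsum, neg_zero]
        · obtain ⟨i, hi⟩ := hGne
          exact ⟨i, by simpa using neg_pos.mpr (lt_of_le_of_ne (hpos i) hi)⟩

end Cones

section Closed

variable {E : Type*} [NormedAddCommGroup E] [NormedSpace ℝ E] [FiniteDimensional ℝ E]

lemma cone_isClosed {ι : Type*} [Fintype ι] (v : ι → E) :
    IsClosed {x : E | ∃ c : ι → ℝ, (∀ i, 0 ≤ c i) ∧ x = ∑ i, c i • v i} := by
  classical
  have hset : {x : E | ∃ c : ι → ℝ, (∀ i, 0 ≤ c i) ∧ x = ∑ i, c i • v i}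
      = ⋃ t ∈ {t : Finset ι | LinearIndependent ℝ (fun i : t => v i)},
        (fun c : t → ℝ => ∑ i, c i • v (i : ι)) '' {c | ∀ i, 0 ≤ c i} := by
    ext x
    simp only [Set.mem_setOf_eq, Set.mem_iUnion, Set.mem_image]
    constructor
    · rintro ⟨c, hc, rfl⟩
      obtain ⟨t, d, hd, hdsupp, hdsum, hli⟩ :=
        carath_cone v (Finset.univ.card) Finset.univ c le_rfl hc
          (fun i hi => absurd (Finset.mem_univ i) hi)
      refine ⟨t, hli, fun i => d i, fun i => hd i, ?_⟩
      rw [Finset.sum_coe_sort t (fun i => d i • v i)]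
      rw [Finset.sum_subset (Finset.subset_univ t)
        (fun i _ hi => by rw [hdsupp i hi, zero_smul])]
      exact hdsum
    · rintro ⟨t, hli, c, hc, rfl⟩
      refine ⟨fun i => if h : i ∈ t then c ⟨i, h⟩ else 0, fun i => ?_, ?_⟩
      · by_cases h : i ∈ t
        · simpa [h] using hc ⟨i, h⟩
        · simp [h]
      · rw [← Finset.sum_subset (Finset.subset_univ t)
          (fun i _ hi => by simp [dif_neg hi])]
        rw [← Finset.sum_attach t (fun i => (if h : i ∈ t then c ⟨i, h⟩ else 0) • v i)]
        rw [Finset.univ_eq_attach]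
        refine Finset.sum_congr rfl fun i _ => ?_
        simp [i.2]
  rw [hset]
  refine Set.Finite.isClosed_biUnion (Set.toFinite _) (fun t ht => ?_)
  have hT : ∃ T : (t → ℝ) →ₗ[ℝ] E, ∀ c : t → ℝ, T c = ∑ i, c i • v (i : ι) := by
    refine ⟨{ toFun := fun c => ∑ i, c i • v (i : ι),
              map_add' := fun a b => by
                simp [add_smul, Finset.sum_add_distrib],
              map_smul' := fun m a => by
                simp [smul_smul, Finset.smul_sum] }, fun c => rfl⟩
  obtain ⟨T, hTdef⟩ := hT
  have hinj : Function.Injective T := by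
    rw [← LinearMap.ker_eq_bot, LinearMap.ker_eq_bot']
    intro m hm
    rw [hTdef] at hm
    have := Fintype.linearIndependent_iff.mp ht m hm
    funext i
    exact this i
  have hemb := LinearMap.isClosedEmbedding_of_injective
      (LinearMap.ker_eq_bot.mpr hinj) (f := T)
  have hcl : IsClosed {c : t → ℝ | ∀ i, 0 ≤ c i} := by
    have : {c : t → ℝ | ∀ i, 0 ≤ c i} = ⋂ i, {c | 0 ≤ c i} := by
      ext c; simp
    rw [this]
    exact isClosed_iInter fun i => isClosed_le continuous_const (continuous_apply i)
  have := hemb.isClosedMap _ hcl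
  convert this using 1
  ext x
  constructor
  · rintro ⟨c, hc, rfl⟩; exact ⟨c, hc, by simp [hTdef c]⟩
  · rintro ⟨c, hc, rfl⟩; exact ⟨c, hc, by simp [hTdef c]⟩

end Closed

section Props

variable {E : Type*} [NormedAddCommGroup E] [NormedSpace ℝ E] [FiniteDimensional ℝ E]

variable {ι : Type*} [Fintype ι]

lemma cone_zero_mem (v : ι → E) :
    (0 : E) ∈ {x : E | ∃ c : ι → ℝ, (∀ i, 0 ≤ c i) ∧ x = ∑ i, c i • v i} :=
  ⟨0, fun i => le_refl 0, by simp⟩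

lemma cone_add_mem (v : ι → E) {a b : E}
    (ha : a ∈ {x : E | ∃ c : ι → ℝ, (∀ i, 0 ≤ c i) ∧ x = ∑ i, c i • v i})
    (hb : b ∈ {x : E | ∃ c : ι → ℝ, (∀ i, 0 ≤ c i) ∧ x = ∑ i, c i • v i}) :
    a + b ∈ {x : E | ∃ c : ι → ℝ, (∀ i, 0 ≤ c i) ∧ x = ∑ i, c i • v i} := by
  obtain ⟨c, hc, rfl⟩ := ha
  obtain ⟨d, hd, rfl⟩ := hb
  exact ⟨c + d, fun i => add_nonneg (hc i) (hd i), by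
    simp [add_smul, Finset.sum_add_distrib]⟩

lemma cone_smul_mem (v : ι → E) {a : E} {t : ℝ} (ht : 0 ≤ t)
    (ha : a ∈ {x : E | ∃ c : ι → ℝ, (∀ i, 0 ≤ c i) ∧ x = ∑ i, c i • v i}) :
    t • a ∈ {x : E | ∃ c : ι → ℝ, (∀ i, 0 ≤ c i) ∧ x = ∑ i, c i • v i} := by
  obtain ⟨c, hc, rfl⟩ := ha
  exact ⟨fun i => t * c i, fun i => mul_nonneg ht (hc i), by
    simp [Finset.smul_sum, smul_smul]⟩

lemma cone_convex (v : ι → E) :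
    Convex ℝ {x : E | ∃ c : ι → ℝ, (∀ i, 0 ≤ c i) ∧ x = ∑ i, c i • v i} := by
  intro a ha b hb p q hp hq _
  exact cone_add_mem v (cone_smul_mem v hp ha) (cone_smul_mem v hq hb)

/-- Separation of a point from a closed convex cone by a linear functional. -/
lemma cone_separation {C : Set E} (hconv : Convex ℝ C) (hcl : IsClosed C)
    (hcone : ∀ x ∈ C, ∀ t : ℝ, 0 ≤ t → t • x ∈ C) (h0 : (0 : E) ∈ C) {p : E} (hp : p ∉ C) :
    ∃ u : E →ₗ[ℝ] ℝ, (∀ x ∈ C, u x ≤ 0) ∧ 0 < u p := by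
  obtain ⟨f, s, hfs, hsp⟩ := geometric_hahn_banach_closed_point hconv hcl hp
  have hs0 : 0 < s := by simpa using hfs 0 h0
  refine ⟨f.toLinearMap, ?_, ?_⟩
  · intro a ha
    by_contra hlt
    push_neg at hlt
    have hfa : 0 < f a := hlt
    have h1 := hfs ((s / f a) • a) (hcone a ha _ (le_of_lt (by positivity)))
    rw [map_smul, smul_eq_mul, div_mul_cancel₀ _ (ne_of_gt hfa)] at h1
    exact lt_irrefl s h1
  · exact lt_trans hs0 hsp

end Props

/-- A convex polyhedral cone with apex at the origin in `ℝⁿ`: the set of nonnegative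
combinations of finitely many vectors, containing no line through the origin. -/
def IsPolyhedralCone {n : ℕ} (σ : Set (EuclideanSpace ℝ (Fin n))) : Prop :=
  (∃ (r : ℕ) (v : Fin r → EuclideanSpace ℝ (Fin n)),
    σ = {x | ∃ c : Fin r → ℝ, (∀ i, 0 ≤ c i) ∧ x = ∑ i, c i • v i}) ∧
  σ ∩ (-σ) = {0}

/-- `τ` is a face of the cone `σ`: the vanishing locus on `σ` of a linear functional which is
nonnegative on `σ`. -/
def IsFaceOf {n : ℕ} (τ σ : Set (EuclideanSpace ℝ (Fin n))) : Prop :=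
  ∃ φ : EuclideanSpace ℝ (Fin n) →ₗ[ℝ] ℝ,
    (∀ x ∈ σ, 0 ≤ φ x) ∧ τ = {x ∈ σ | φ x = 0}

/-- The sequence `(x k)` "converges to infinity along the cone `σ`": for some complement `F`
of `L(σ)`, writing `x k = y k + z k` with `y k ∈ F` and `z k ∈ L(σ)`, the sequence `y`
converges and, for every `w ∈ L(σ)`, eventually `z k ∈ w + σ`. -/
def ConvergesAlong {n : ℕ} (σ : Set (EuclideanSpace ℝ (Fin n)))
    (x : ℕ → EuclideanSpace ℝ (Fin n)) : Prop :=
  ∃ F : Submodule ℝ (EuclideanSpace ℝ (Fin n)), IsCompl (Submodule.span ℝ σ) F ∧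
    ∃ y z : ℕ → EuclideanSpace ℝ (Fin n),
      (∀ k, x k = y k + z k) ∧ (∀ k, y k ∈ F) ∧ (∀ k, z k ∈ Submodule.span ℝ σ) ∧
      (∃ l, Filter.Tendsto y Filter.atTop (nhds l)) ∧
      (∀ w ∈ Submodule.span ℝ σ, ∃ p : ℕ, ∀ k ≥ p, z k - w ∈ σ)


section Deep

variable {n : ℕ}

local notation "E'" => EuclideanSpace ℝ (Fin n)

/-- The difference set of two polyhedral cones is a finitely generated cone. -/
lemma diff_rep {σ σ' : Set E'} (h : IsPolyhedralCone σ) (h' : IsPolyhedralCone σ') :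
    ∃ (ι : Type) (_ : Fintype ι) (w : ι → E'),
      {x : E' | ∃ a ∈ σ, ∃ b ∈ σ', x = a - b}
        = {x | ∃ c : ι → ℝ, (∀ i, 0 ≤ c i) ∧ x = ∑ i, c i • w i} := by
  obtain ⟨⟨r, v, hv⟩, -⟩ := h
  obtain ⟨⟨r', v', hv'⟩, -⟩ := h'
  refine ⟨Fin r ⊕ Fin r', inferInstance, Sum.elim v (fun j => -v' j), ?_⟩
  subst hv hv'
  ext x
  constructor
  · rintro ⟨a, ⟨c, hc, rfl⟩, b, ⟨c', hc', rfl⟩, rfl⟩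
    refine ⟨Sum.elim c c', ?_, ?_⟩
    · rintro (i | j)
      · exact hc i
      · exact hc' j
    · rw [Fintype.sum_sum_type]
      simp [smul_neg, sub_eq_add_neg]
  · rintro ⟨e, he, rfl⟩
    refine ⟨∑ i, e (Sum.inl i) • v i, ⟨fun i => e (Sum.inl i), fun i => he _, rfl⟩,
      ∑ j, e (Sum.inr j) • v' j, ⟨fun j => e (Sum.inr j), fun j => he _, rfl⟩, ?_⟩
    rw [Fintype.sum_sum_type]
    simp [smul_neg, sub_eq_add_neg]

/-- If a linear functional is nonnegative on `σ` and positive somewhere on `σ`, it tends to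
`+∞` along a sequence converging to infinity along `σ`. -/
lemma tendsto_of_deep {σ : Set E'} {x y z : ℕ → E'} {l : E'}
    (hxyz : ∀ k, x k = y k + z k) (hyl : Filter.Tendsto y Filter.atTop (nhds l))
    (hdeep : ∀ w ∈ Submodule.span ℝ σ, ∃ p : ℕ, ∀ k ≥ p, z k - w ∈ σ)
    (φ : E' →ₗ[ℝ] ℝ) (hφ : ∀ s ∈ σ, 0 ≤ φ s) {v : E'} (hv : v ∈ σ) (hvpos : 0 < φ v) :
    Filter.Tendsto (fun k => φ (x k)) Filter.atTop Filter.atTop := by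
  have hz : Filter.Tendsto (fun k => φ (z k)) Filter.atTop Filter.atTop := by
    rw [Filter.tendsto_atTop]
    intro B
    set t : ℝ := max (B / φ v) 0 with htdef
    have ht0 : 0 ≤ t := le_max_right _ _
    have htB : B ≤ t * φ v := by
      have h1 : B / φ v ≤ t := le_max_left _ _
      calc B = (B / φ v) * φ v := by field_simp
        _ ≤ t * φ v := by nlinarith
    have hw : t • v ∈ Submodule.span ℝ σ :=
      Submodule.smul_mem _ t (Submodule.subset_span hv)
    obtain ⟨p, hp⟩ := hdeep (t • v) hw
    rw [Filter.eventually_atTop]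
    refine ⟨p, fun k hk => ?_⟩
    have h2 := hφ _ (hp k hk)
    rw [map_sub, map_smul, smul_eq_mul] at h2
    linarith
  have hy : Filter.Tendsto (fun k => φ (y k)) Filter.atTop (nhds (φ l)) :=
    ((φ.continuous_of_finiteDimensional).tendsto l).comp hyl
  have := hy.add_atTop hz
  refine this.congr fun k => ?_
  rw [hxyz k, map_add]

end Deep

section Main

variable {n : ℕ}

local notation "E'" => EuclideanSpace ℝ (Fin n)

lemma poly_zero_mem {σ : Set E'} (h : IsPolyhedralCone σ) : (0 : E') ∈ σ := by
  obtain ⟨⟨r, v, rfl⟩, -⟩ := h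
  exact cone_zero_mem v

lemma poly_add_mem {σ : Set E'} (h : IsPolyhedralCone σ) {a b : E'}
    (ha : a ∈ σ) (hb : b ∈ σ) : a + b ∈ σ := by
  obtain ⟨⟨r, v, rfl⟩, -⟩ := h
  exact cone_add_mem v ha hb

lemma subset_of_convergesAlong {σ σ' : Set E'}
    (hσp : IsPolyhedralCone σ) (hσ'p : IsPolyhedralCone σ')
    (hface : IsFaceOf (σ ∩ σ') σ) (hface' : IsFaceOf (σ ∩ σ') σ')
    {x : ℕ → E'} (h : ConvergesAlong σ x) (h' : ConvergesAlong σ' x) : σ ⊆ σ' := by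
  classical
  by_contra hns
  obtain ⟨v, hvσ, hvσ'⟩ := Set.not_subset.mp hns
  obtain ⟨φ, hφ0, hφτ⟩ := hface
  obtain ⟨φ', hφ'0, hφ'τ⟩ := hface'
  obtain ⟨F, -, y, z, hxyz, hyF, hzL, ⟨l, hyl⟩, hdeep⟩ := h
  obtain ⟨F', -, y', z', hxyz', hyF', hzL', ⟨l', hyl'⟩, hdeep'⟩ := h'
  by_cases hss : σ' ⊆ σ
  · -- then σ' = σ ∩ σ' and φ vanishes on σ', while φ (x k) → ∞
    have hvτ : v ∉ σ ∩ σ' := fun hv => hvσ' hv.2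
    have hφv : 0 < φ v := by
      rcases lt_or_eq_of_le (hφ0 v hvσ) with h1 | h1
      · exact h1
      · exact absurd (by rw [hφτ]; exact ⟨hvσ, h1.symm⟩) hvτ
    have htop := tendsto_of_deep hxyz hyl hdeep φ hφ0 hvσ hφv
    have hφσ' : ∀ s ∈ σ', φ s = 0 := by
      intro s hs
      have : s ∈ σ ∩ σ' := ⟨hss hs, hs⟩
      rw [hφτ] at this
      exact this.2
    have hφL : ∀ w ∈ Submodule.span ℝ σ', φ w = 0 := by
      intro w hw
      have hle : Submodule.span ℝ σ' ≤ LinearMap.ker φ :=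
        Submodule.span_le.mpr fun s hs => LinearMap.mem_ker.mpr (hφσ' s hs)
      exact hle hw
    have hconv : Filter.Tendsto (fun k => φ (x k)) Filter.atTop (nhds (φ l')) := by
      have hcomp : Filter.Tendsto (fun k => φ (y' k)) Filter.atTop (nhds (φ l')) :=
        ((φ.continuous_of_finiteDimensional).tendsto l').comp hyl'
      refine hcomp.congr fun k => ?_
      rw [hxyz' k, map_add, hφL (z' k) (hzL' k), add_zero]
    exact not_tendsto_atTop_of_tendsto_nhds hconv htop
  · -- main case: build a separating functional
    obtain ⟨v', hv'σ', hv'σ⟩ := Set.not_subset.mp hss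
    -- the difference cone
    obtain ⟨ι, hι, w, hDrep⟩ := diff_rep hσp hσ'p
    have hDconv : Convex ℝ {x : E' | ∃ a ∈ σ, ∃ b ∈ σ', x = a - b} := by
      rw [hDrep]; exact cone_convex w
    have hDcl : IsClosed {x : E' | ∃ a ∈ σ, ∃ b ∈ σ', x = a - b} := by
      rw [hDrep]; exact cone_isClosed w
    have hDcone : ∀ p ∈ {x : E' | ∃ a ∈ σ, ∃ b ∈ σ', x = a - b}, ∀ t : ℝ, 0 ≤ t →
        t • p ∈ {x : E' | ∃ a ∈ σ, ∃ b ∈ σ', x = a - b} := by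
      intro p hp t ht
      rw [hDrep] at hp ⊢
      exact cone_smul_mem w ht hp
    have hD0 : (0 : E') ∈ {x : E' | ∃ a ∈ σ, ∃ b ∈ σ', x = a - b} := by
      rw [hDrep]; exact cone_zero_mem w
    -- the cone K of separating functionals
    set K : Set (E' →ₗ[ℝ] ℝ) :=
      {u | (∀ s ∈ σ, 0 ≤ u s) ∧ (∀ s ∈ σ', u s ≤ 0)} with hKdef
    have hKcomb : ∀ (t : Finset (E' →ₗ[ℝ] ℝ)), (↑t ⊆ K) → ∀ f : (E' →ₗ[ℝ] ℝ) → ℝ,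
        (∀ u ∈ t, 0 ≤ f u) → (∑ u ∈ t, f u • u) ∈ K := by
      intro t ht f hf
      constructor
      · intro s hs
        rw [LinearMap.sum_apply]
        refine Finset.sum_nonneg fun u hu => ?_
        rw [LinearMap.smul_apply, smul_eq_mul]
        exact mul_nonneg (hf u hu) ((ht hu).1 s hs)
      · intro s hs
        rw [LinearMap.sum_apply]
        refine Finset.sum_nonpos fun u hu => ?_
        rw [LinearMap.smul_apply, smul_eq_mul]
        exact mul_nonpos_of_nonneg_of_nonpos (hf u hu) ((ht hu).2 s hs)
    obtain ⟨b, hbK, hbspan, hbli⟩ := exists_linearIndependent ℝ K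
    have hbfin : b.Finite := hbli.setFinite
    set tb : Finset (E' →ₗ[ℝ] ℝ) := hbfin.toFinset with htb
    have htbK : (↑tb : Set (E' →ₗ[ℝ] ℝ)) ⊆ K := by
      rw [htb, Set.Finite.coe_toFinset]; exact hbK
    set lam : E' →ₗ[ℝ] ℝ := ∑ u ∈ tb, u with hlam
    have hlamK : lam ∈ K := by
      have := hKcomb tb htbK (fun _ => 1) (fun u _ => zero_le_one)
      simpa [hlam] using this
    -- λ is in the "relative interior" of K
    have hkey : ∀ u ∈ K, ∃ ε : ℝ, 0 < ε ∧ lam - ε • u ∈ K := by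
      intro u hu
      have hub : u ∈ Submodule.span ℝ b := by
        rw [hbspan]; exact Submodule.subset_span hu
      rw [← hbfin.coe_toFinset, Submodule.mem_span_finset] at hub
      obtain ⟨f, -, hf⟩ := hub
      set M := ∑ i ∈ tb, |f i| with hM
      have hM0 : 0 ≤ M := Finset.sum_nonneg fun i _ => abs_nonneg _
      refine ⟨1 / (M + 1), by positivity, ?_⟩
      have heq : lam - (1 / (M + 1)) • u = ∑ i ∈ tb, (1 - (1 / (M + 1)) * f i) • i := by
        rw [hlam, ← hf]
        rw [Finset.smul_sum]
        rw [← Finset.sum_sub_distrib]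
        refine Finset.sum_congr rfl fun i _ => ?_
        rw [smul_smul]; module
      rw [heq]
      refine hKcomb tb htbK _ fun i hi => ?_
      have hfi : |f i| ≤ M := Finset.single_le_sum (fun j _ => abs_nonneg (f j)) hi
      have h1 : f i ≤ M := le_trans (le_abs_self _) hfi
      have h2 : (1 / (M + 1)) * f i ≤ (1 / (M + 1)) * M := by
        apply mul_le_mul_of_nonneg_left h1
        positivity
      have h3 : (1 / (M + 1)) * M < 1 := by
        rw [div_mul_eq_mul_div, one_mul, div_lt_one (by positivity)]
        linarith
      linarith
    -- on the kernel of λ within σ ∪ σ', every element of K vanishes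
    have hker : ∀ p : E', (p ∈ σ ∨ p ∈ σ') → lam p = 0 → ∀ u ∈ K, u p = 0 := by
      intro p hp hp0 u hu
      obtain ⟨ε, hε, hεK⟩ := hkey u hu
      rcases hp with hpσ | hpσ'
      · have h1 := hεK.1 p hpσ
        rw [LinearMap.sub_apply, LinearMap.smul_apply, smul_eq_mul, hp0] at h1
        have h2 : u p ≤ 0 := by nlinarith
        exact le_antisymm h2 (hu.1 p hpσ)
      · have h1 := hεK.2 p hpσ'
        rw [LinearMap.sub_apply, LinearMap.smul_apply, smul_eq_mul, hp0] at h1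
        have h2 : 0 ≤ u p := by nlinarith
        exact le_antisymm (hu.2 p hpσ') h2
    -- such points lie in ±D
    have hmemD : ∀ p : E', (∀ u ∈ K, u p = 0) →
        p ∈ {x : E' | ∃ a ∈ σ, ∃ b ∈ σ', x = a - b} ∧
        -p ∈ {x : E' | ∃ a ∈ σ, ∃ b ∈ σ', x = a - b} := by
      intro p hp
      have haux : ∀ q : E', (∀ u ∈ K, u q = 0) →
          q ∈ {x : E' | ∃ a ∈ σ, ∃ b ∈ σ', x = a - b} := by
        intro q hq
        by_contra hqD
        obtain ⟨u₀, hu₀D, hu₀q⟩ := cone_separation hDconv hDcl hDcone hD0 hqD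
        have hu₀K : -u₀ ∈ K := by
          constructor
          · intro s hs
            have : s ∈ {x : E' | ∃ a ∈ σ, ∃ b ∈ σ', x = a - b} :=
              ⟨s, hs, 0, poly_zero_mem hσ'p, by rw [sub_zero]⟩
            have := hu₀D s this
            simp only [LinearMap.neg_apply]
            linarith
          · intro s hs
            have : -s ∈ {x : E' | ∃ a ∈ σ, ∃ b ∈ σ', x = a - b} :=
              ⟨0, poly_zero_mem hσp, s, hs, by rw [zero_sub]⟩
            have := hu₀D (-s) this
            rw [map_neg] at this
            simp only [LinearMap.neg_apply]
            linarith
        have := hq (-u₀) hu₀K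
        rw [LinearMap.neg_apply] at this
        linarith
      refine ⟨haux p hp, haux (-p) fun u hu => ?_⟩
      rw [map_neg, hp u hu, neg_zero]
    -- λ does not vanish on σ \ σ' nor on σ' \ σ
    have hfaceσ : ∀ p ∈ σ, lam p = 0 → p ∈ σ' := by
      intro p hp hp0
      have hK0 := hker p (Or.inl hp) hp0
      obtain ⟨-, hmp⟩ := hmemD p hK0
      obtain ⟨a, ha, c, hc, hac⟩ := hmp
      have hb : a + p = c := by
        have h2 : p = c - a := by rw [← neg_neg p, hac, neg_sub]
        rw [h2]; abel
      have hapτ : a + p ∈ σ ∩ σ' := ⟨poly_add_mem hσp ha hp, hb ▸ hc⟩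
      rw [hφτ] at hapτ
      have h1 : φ a + φ p = 0 := by rw [← map_add]; exact hapτ.2
      have h2 : φ p = 0 := le_antisymm (by have := hφ0 a ha; linarith) (hφ0 p hp)
      have : p ∈ σ ∩ σ' := by rw [hφτ]; exact ⟨hp, h2⟩
      exact this.2
    have hfaceσ' : ∀ p ∈ σ', lam p = 0 → p ∈ σ := by
      intro p hp hp0
      have hK0 := hker p (Or.inr hp) hp0
      obtain ⟨hmp, -⟩ := hmemD p hK0
      obtain ⟨a, ha, c, hc, hac⟩ := hmp
      have hb : p + c = a := by rw [hac]; abel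
      have haτ : a ∈ σ ∩ σ' := ⟨ha, hb ▸ poly_add_mem hσ'p hp hc⟩
      rw [hφ'τ] at haτ
      have h1 : φ' p + φ' c = 0 := by rw [← map_add, hb]; exact haτ.2
      have h2 : φ' p = 0 := le_antisymm (by have := hφ'0 c hc; linarith) (hφ'0 p hp)
      have : p ∈ σ ∩ σ' := by rw [hφ'τ]; exact ⟨hp, h2⟩
      exact this.1
    -- now get the contradiction
    have hlamv : 0 < lam v :=
      lt_of_le_of_ne (hlamK.1 v hvσ) fun hh => hvσ' (hfaceσ v hvσ hh.symm)
    have hlamv' : lam v' < 0 :=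
      lt_of_le_of_ne (hlamK.2 v' hv'σ') fun hh => hv'σ (hfaceσ' v' hv'σ' hh)
    have htop := tendsto_of_deep hxyz hyl hdeep lam hlamK.1 hvσ hlamv
    have htop' := tendsto_of_deep hxyz' hyl' hdeep' (-lam)
      (fun s hs => by simpa using hlamK.2 s hs) hv'σ'
      (by simpa using hlamv')
    have h1 := htop.eventually_ge_atTop 1
    have h2 := htop'.eventually_ge_atTop 1
    obtain ⟨k, hk1, hk2⟩ := (h1.and h2).exists
    rw [LinearMap.neg_apply] at hk2
    linarith

end Main

/-- In a fan `Δ`, a sequence of points of `ℝⁿ` can converge to infinity along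
at most one cone of `Δ`. -/
theorem cone_of_convergence_unique {n : ℕ}
    (Δ : Set (Set (EuclideanSpace ℝ (Fin n))))
    (hcones : ∀ σ ∈ Δ, IsPolyhedralCone σ)
    (hfaces : ∀ σ ∈ Δ, ∀ τ, IsFaceOf τ σ → τ ∈ Δ)
    (hinter : ∀ σ ∈ Δ, ∀ σ' ∈ Δ, IsFaceOf (σ ∩ σ') σ ∧ IsFaceOf (σ ∩ σ') σ')
    (x : ℕ → EuclideanSpace ℝ (Fin n))
    (σ σ' : Set (EuclideanSpace ℝ (Fin n))) (hσ : σ ∈ Δ) (hσ' : σ' ∈ Δ)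
    (h : ConvergesAlong σ x) (h' : ConvergesAlong σ' x) :
    σ = σ' := by
  have h1 := hinter σ hσ σ' hσ'
  have h2 := hinter σ' hσ' σ hσ
  exact Set.Subset.antisymm
    (subset_of_convergesAlong (hcones σ hσ) (hcones σ' hσ') h1.1 h1.2 h h')
    (subset_of_convergesAlong (hcones σ' hσ') (hcones σ hσ) h2.1 h2.2 h' h)
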